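/- The lifted immediate consequence operator is monotone: for any program P, if 𝒞₁ ≤ 𝒞₂ as choice sets, then T_P*(𝒞₁) ≤ T_P*(𝒞₂), where T_P*(𝒞) = ⋃_{Δ ∈ 𝒞} T_P(Δ). -/
import Mathlib


open scoped Classical

namespace FCLP

/-! ### Terms -/

/-- Ground (Herbrand) terms: uninterpreted function symbols applied to ground terms. -/
inductive GTerm : Type where
  | func : ℕ → List GTerm → GTerm

/-- Terms possibly containing variables. -/
inductive VTerm : Type where
  | var : ℕ → VTerm
  | func : ℕ → List VTerm → VTerm

/-- A substitution is a total map from variables to ground terms. -/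
abbrev Subst := ℕ → GTerm

mutual
  /-- Applying a substitution to a term. -/
  def VTerm.subst (σ : Subst) : VTerm → GTerm
    | .var x => σ x
    | .func f args => .func f (VTerm.substList σ args)
  def VTerm.substList (σ : Subst) : List VTerm → List GTerm
    | [] => []
    | t :: ts => VTerm.subst σ t :: VTerm.substList σ ts
end

/-- The variable `x` occurs in the term. -/
inductive VTerm.HasVar : VTerm → ℕ → Prop where
  | var (x : ℕ) : VTerm.HasVar (.var x) x
  | func {f : ℕ} {args : List VTerm} {t : VTerm} {x : ℕ} :
      t ∈ args → VTerm.HasVar t x → VTerm.HasVar (.func f args) x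

/-! ### Attributes, facts, rules, programs -/

/-- An attribute `p(t₁,...,tₙ)`: a predicate applied to ground terms. -/
structure Attr where
  pred : ℕ
  args : List GTerm

/-- A fact `p(t̄) is v`. -/
structure Fact where
  attr : Attr
  value : GTerm

/-- A premise `p(t̄) is v`, possibly containing variables. -/
structure VAtom where
  pred : ℕ
  args : List VTerm
  value : VTerm

def VAtom.subst (σ : Subst) (A : VAtom) : Fact :=
  ⟨⟨A.pred, A.args.map (VTerm.subst σ)⟩, A.value.subst σ⟩

def VAtom.HasVar (A : VAtom) (x : ℕ) : Prop :=
  (∃ t ∈ A.args, t.HasVar x) ∨ A.value.HasVar x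

/-- A rule head: open `p(t̄) is? v` or closed `p(t̄) is {v₁,...,vₘ}`. -/
inductive Head : Type where
  | opn : ℕ → List VTerm → VTerm → Head
  | closed : ℕ → List VTerm → List VTerm → Head

def Head.HasVar : Head → ℕ → Prop
  | .opn _ args v, x => (∃ t ∈ args, t.HasVar x) ∨ v.HasVar x
  | .closed _ args vs, x => (∃ t ∈ args, t.HasVar x) ∨ ∃ v ∈ vs, v.HasVar x

/-- The ground attribute of a rule head under a substitution. -/
def Head.groundAttr (σ : Subst) : Head → Attr
  | .opn p args _ => ⟨p, args.map (VTerm.subst σ)⟩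
  | .closed p args _ => ⟨p, args.map (VTerm.subst σ)⟩

/-- A rule `H ← F` with a finite collection of premises. -/
structure Rule where
  head : Head
  prems : List VAtom

/-- Wellformedness: closed heads offer at least one value, and every
variable in the head occurs in a premise. -/
def Rule.WF (r : Rule) : Prop :=
  (∀ x, r.head.HasVar x → ∃ A ∈ r.prems, A.HasVar x) ∧
  (∀ p args vs, r.head = .closed p args vs → vs ≠ [])

/-- A program is a set of rules. -/
abbrev Program := Set Rule

/-- A program is a *finite* set of *wellformed* rules. -/
def Program.WFP (P : Program) : Prop := P.Finite ∧ ∀ r ∈ P, r.WF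

/-! ### Fact-set semantics -/

/-- A set of facts is consistent when each attribute has at most one value. -/
def Consistent (D : Set Fact) : Prop :=
  ∀ f ∈ D, ∀ g ∈ D, f.attr = g.attr → f = g

/-- `σ` satisfies the premises `F` in the fact-set database `D`. -/
def satF (σ : Subst) (F : List VAtom) (D : Set Fact) : Prop :=
  ∀ A ∈ F, A.subst σ ∈ D

/-- Fact-set evolution `D →_P S`. -/
inductive Evolve (P : Program) : Set Fact → Set (Set Fact) → Prop where
  | triv (D : Set Fact) : Evolve P D {D}
  | closed {D : Set Fact} {r : Rule} {p : ℕ} {args vs : List VTerm} {σ : Subst} :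
      r ∈ P → r.head = .closed p args vs → satF σ r.prems D →
      Evolve P D
        { E | ∃ v ∈ vs,
            E = insert (⟨⟨p, args.map (VTerm.subst σ)⟩, VTerm.subst σ v⟩ : Fact) D ∧
            Consistent E }
  | opn {D : Set Fact} {r : Rule} {p : ℕ} {args : List VTerm} {v : VTerm} {σ : Subst} :
      r ∈ P → r.head = .opn p args v → satF σ r.prems D →
      Evolve P D
        ({D} ∪ { E | E = insert (⟨⟨p, args.map (VTerm.subst σ)⟩, VTerm.subst σ v⟩ : Fact) D ∧
                     Consistent E })

/-- `P` allows `D` to step to `D'`. -/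
def Step (P : Program) (D D' : Set Fact) : Prop := ∃ S, Evolve P D S ∧ D' ∈ S

/-- A database is saturated when its only evolution is the singleton of itself. -/
def Saturated (P : Program) (D : Set Fact) : Prop := ∀ S, Evolve P D S → S = {D}

/-- A solution: a saturated database reachable from `∅` by a (finite) step sequence. -/
def Solution (P : Program) (D : Set Fact) : Prop :=
  Relation.ReflTransGen (Step P) ∅ D ∧ Saturated P D

/-! ### Constraints and constraint databases -/

/-- A constraint: `just t` or `noneOf X`. -/
inductive Constraint : Type where
  | just : GTerm → Constraint
  | noneOf : Set GTerm → Constraint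

/-- The order on constraints. -/
def Constraint.le : Constraint → Constraint → Prop
  | .noneOf X, .noneOf Y => X ⊆ Y
  | .noneOf X, .just t => t ∉ X
  | .just t, .just t' => t = t'
  | .just _, .noneOf _ => False

instance : LE Constraint := ⟨Constraint.le⟩

/-- Least upper bound of a (compatible) set of constraints: if some `just t` is present
it is the lub; otherwise it is `noneOf` of the union. -/
noncomputable def Constraint.lub (C : Set Constraint) : Constraint :=
  if h : ∃ t, Constraint.just t ∈ C then .just h.choose
  else .noneOf (⋃₀ { X | Constraint.noneOf X ∈ C })

/-- A constraint database: a map from ground attributes to constraints,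
ordered pointwise (via the `Pi` order). -/
abbrev CDB := Attr → Constraint

/-- The least constraint database: every attribute maps to `noneOf ∅`. -/
def cdbBot : CDB := fun _ => .noneOf ∅

/-- Pointwise least upper bound of a (compatible) set of constraint databases. -/
noncomputable def CDB.lub (S : Set CDB) : CDB :=
  fun a => Constraint.lub ((fun Δ => Δ a) '' S)

/-- A subset of a poset is compatible when it has an upper bound. -/
def Compatible {α : Type*} [LE α] (X : Set α) : Prop := ∃ y, ∀ x ∈ X, x ≤ y

/-- Binary compatibility. -/
def Compat {α : Type*} [LE α] (x y : α) : Prop := Compatible ({x, y} : Set α)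

/-- A choice set: a pairwise-incompatible set of constraint databases. -/
def IsChoiceSet (𝒞 : Set CDB) : Prop :=
  ∀ D ∈ 𝒞, ∀ E ∈ 𝒞, Compat D E → D = E

/-- The order on choice sets. -/
def ChoiceLE (𝒞₁ 𝒞₂ : Set CDB) : Prop :=
  ∀ D₂ ∈ 𝒞₂, ∃ D₁ ∈ 𝒞₁, D₁ ≤ D₂

/-- Least upper bound of an indexed family of choice sets:
`⋁ᵢ 𝒞ᵢ = { ⋁ Im(f) : f ∈ ∏ᵢ 𝒞ᵢ, Im(f) compatible }`. -/
noncomputable def ChoiceJoin {I : Type*} (𝒞 : I → Set CDB) : Set CDB :=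
  { E | ∃ f : I → CDB, (∀ i, f i ∈ 𝒞 i) ∧ Compatible (Set.range f) ∧
        E = CDB.lub (Set.range f) }

/-- Least upper bound of a set of choice sets. -/
noncomputable def ChoiceSJoin (S : Set (Set CDB)) : Set CDB :=
  ChoiceJoin (fun C : S => (C : Set CDB))

/-- Greatest lower bound of a set of choice sets:
`⋀ X = ⋁ {𝒞 : ∀ x ∈ X, 𝒞 ≤ x}` (join over choice-set lower bounds). -/
noncomputable def ChoiceMeet (S : Set (Set CDB)) : Set CDB :=
  ChoiceSJoin { C | IsChoiceSet C ∧ ∀ X ∈ S, ChoiceLE C X }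

/-! ### Immediate consequence -/

/-- `σ` satisfies `F` in the constraint database `Δ`. -/
def satC (σ : Subst) (F : List VAtom) (Δ : CDB) : Prop :=
  ∀ A ∈ F, Constraint.just (A.value.subst σ) ≤ Δ ⟨A.pred, A.args.map (VTerm.subst σ)⟩

/-- The constraint database mapping `a` to `c` and every other attribute to `noneOf ∅`. -/
noncomputable def unitCDB (a : Attr) (c : Constraint) : CDB :=
  fun a' => if a' = a then c else .noneOf ∅

/-- The choice set `⟨σH⟩` determined by a ground rule head. -/
noncomputable def headChoice (σ : Subst) : Head → Set CDB
  | .opn p args v =>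
      { unitCDB ⟨p, args.map (VTerm.subst σ)⟩ (.just (v.subst σ)),
        unitCDB ⟨p, args.map (VTerm.subst σ)⟩ (.noneOf {v.subst σ}) }
  | .closed p args vs =>
      { Δ | ∃ v ∈ vs, Δ = unitCDB ⟨p, args.map (VTerm.subst σ)⟩ (.just (v.subst σ)) }

/-- The immediate consequence operator
`T_P(Δ) = {Δ} ∨ ⋁{ ⟨σH⟩ : (H ← F) ∈ P, σ satisfies F in Δ }`. -/
noncomputable def TP (P : Program) (Δ : CDB) : Set CDB :=
  ChoiceSJoin
    (insert {Δ} { C | ∃ r ∈ P, ∃ σ : Subst, satC σ r.prems Δ ∧ C = headChoice σ r.head })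

/-- The attribute-specific immediate consequence operator `T_{P[a]}`. -/
noncomputable def TPa (P : Program) (a : Attr) (Δ : CDB) : Set CDB :=
  ChoiceSJoin
    { C | ∃ r ∈ P, ∃ σ : Subst, satC σ r.prems Δ ∧ r.head.groundAttr σ = a ∧
          C = headChoice σ r.head }

/-- The lifted immediate consequence operator `T_P*(𝒞) = ⋃_{Δ ∈ 𝒞} T_P(Δ)`. -/
noncomputable def TPs (P : Program) (𝒞 : Set CDB) : Set CDB :=
  { E | ∃ Δ ∈ 𝒞, E ∈ TP P Δ }

/-- The least fixed point of `T_P*`, defined à la Knaster–Tarski as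
`⋀ {𝒞 : T_P*(𝒞) ≤ 𝒞}`. -/
noncomputable def lfpTPs (P : Program) : Set CDB :=
  ChoiceMeet { C | IsChoiceSet C ∧ ChoiceLE (TPs P C) C }

/-! ### Positive and finite constraint databases, promotion and erasure -/

/-- A constraint database is positive when `noneOf X` only occurs with `X = ∅`. -/
def CDBPositive (Δ : CDB) : Prop := ∀ a X, Δ a = .noneOf X → X = ∅

/-- A constraint database is finite. -/
def CDBFinite (Δ : CDB) : Prop :=
  { a | Δ a ≠ .noneOf ∅ }.Finite ∧ ∀ a X, Δ a = .noneOf X → X.Finite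

/-- Promotion of a (consistent) fact set to a constraint database. -/
noncomputable def promote (D : Set Fact) : CDB :=
  fun a => if h : ∃ v, (⟨a, v⟩ : Fact) ∈ D then .just h.choose else .noneOf ∅

/-- Erasure of a constraint database to a fact set. -/
def eraseCDB (Δ : CDB) : Set Fact := { f | Δ f.attr = .just f.value }

/-! ### The abstract algorithm -/

/-- `P` allows `Δ` to take an algorithmic step to any `Δ' ∈ {Δ} ∨ T_{P[a]}(Δ)`
for some attribute `a`, provided `T_P(Δ) ≠ ∅`. -/
noncomputable def AlgStep (P : Program) (Δ Δ' : CDB) : Prop :=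
  TP P Δ ≠ ∅ ∧ ∃ a : Attr, Δ' ∈ ChoiceSJoin {({Δ} : Set CDB), TPa P a Δ}

/-! ### Datalog -/

/-- A datalog atom, possibly with variables. -/
structure DAtom where
  pred : ℕ
  args : List VTerm

/-- A ground datalog atom. -/
structure GAtom where
  pred : ℕ
  args : List GTerm

def DAtom.subst (σ : Subst) (A : DAtom) : GAtom := ⟨A.pred, A.args.map (VTerm.subst σ)⟩

/-- A datalog rule `p(t̄) ← p₁(t̄₁), ..., pₙ(t̄ₙ)`. -/
structure DRule where
  head : DAtom
  prems : List DAtom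

/-- Every variable of the head appears in a premise. -/
def DRule.WF (r : DRule) : Prop :=
  ∀ x, (∃ t ∈ r.head.args, t.HasVar x) → ∃ A ∈ r.prems, ∃ t ∈ A.args, t.HasVar x

/-- The datalog immediate consequence operator. -/
def dImmCons (P : Set DRule) (X : Set GAtom) : Set GAtom :=
  { g | ∃ r ∈ P, ∃ σ : Subst, (∀ A ∈ r.prems, A.subst σ ∈ X) ∧ g = r.head.subst σ }

/-- The least model of a datalog program: the least fixed point of `dImmCons`. -/
def dModel (P : Set DRule) : Set GAtom := ⋂₀ { X | dImmCons P X ⊆ X }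

/-- Translation of a datalog program to a finite-choice logic program, using the
constant with (fresh) function symbol `u` as the value `unit`. -/
def trDatalog (u : ℕ) (P : Set DRule) : Program :=
  { r | ∃ dr ∈ P,
      r = ⟨Head.closed dr.head.pred dr.head.args [VTerm.func u []],
           dr.prems.map (fun A => ⟨A.pred, A.args, VTerm.func u []⟩)⟩ }

/-! ### Answer set programming -/

/-- A ground ASP rule `p ← p₁,...,pₙ, ¬q₁,...,¬qₘ` over propositional atoms. -/
structure ASPRule where
  head : ℕ
  pos : List ℕ
  neg : List ℕ

/-- One step of the immediate consequence operator of the reduct `P^X`. -/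
def reductCons (P : Set ASPRule) (X : Set ℕ) (Y : Set ℕ) : Set ℕ :=
  { p | ∃ r ∈ P, r.head = p ∧ (∀ q ∈ r.pos, q ∈ Y) ∧ (∀ q ∈ r.neg, q ∉ X) }

/-- The least model of the reduct `P^X`. -/
def reductModel (P : Set ASPRule) (X : Set ℕ) : Set ℕ :=
  ⋂₀ { Y | reductCons P X Y ⊆ Y }

/-- `X` is a stable model of `P` when the least model of the reduct `P^X` equals `X`. -/
def StableModel (P : Set ASPRule) (X : Set ℕ) : Prop := reductModel P X = X

/-- The fresh constant `tt` (as a ground term). -/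
def ttT : GTerm := .func 0 []
/-- The fresh constant `ff` (as a ground term). -/
def ffT : GTerm := .func 1 []
/-- The constant `tt` as a (closed) term of the rule language. -/
def ttV : VTerm := .func 0 []
/-- The constant `ff` as a (closed) term of the rule language. -/
def ffV : VTerm := .func 1 []

/-- The premise `p is tt`. -/
def posPrem (p : ℕ) : VAtom := ⟨p, [], ttV⟩
/-- The premise `q is ff`. -/
def negPrem (q : ℕ) : VAtom := ⟨q, [], ffV⟩

/-- Translation of an ASP program to a finite-choice logic program: each rule
`p ← p₁,...,pₙ, ¬q₁,...,¬qₘ` becomes `m` open rules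
`qⱼ is? ff ← p₁ is tt,...,pₙ is tt, q₁ is ff,...,q_{j-1} is ff` and one closed rule
`p is {tt} ← p₁ is tt,...,pₙ is tt, q₁ is ff,...,qₘ is ff`. -/
def trASP (P : Set ASPRule) : Program :=
  { r | ∃ ar ∈ P,
      (∃ j : Fin ar.neg.length,
        r = ⟨Head.opn (ar.neg.get j) [] ffV,
             ar.pos.map posPrem ++ (ar.neg.take j.val).map negPrem⟩) ∨
      r = ⟨Head.closed ar.head [] [ttV],
           ar.pos.map posPrem ++ ar.neg.map negPrem⟩ }

lemma Constraint.le_trans : ∀ {a b c : Constraint}, a ≤ b → b ≤ c → a ≤ c := by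
  intro a b c hab hbc
  cases a <;> cases b <;> cases c <;>
    simp only [LE.le, Constraint.le] at * <;> first
    | exact hab.trans hbc
    | (subst hab; exact hbc)
    | (subst hbc; exact hab)
    | exact fun hx => hbc (hab hx)
    | trivial

lemma just_le_iff {v : GTerm} {c : Constraint} : Constraint.just v ≤ c ↔ c = .just v := by
  cases c <;> simp [LE.le, Constraint.le] <;> exact eq_comm

lemma Constraint.lub_le {X : Set Constraint} {c : Constraint}
    (h : ∀ x ∈ X, x ≤ c) : Constraint.lub X ≤ c := by
  unfold Constraint.lub
  split
  · next hj => exact h _ hj.choose_spec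
  · cases c with
    | just t =>
      show t ∉ _
      rintro ⟨Y, hY, htY⟩
      exact (h _ hY) htY
    | noneOf Z =>
      show _ ⊆ Z
      rintro t ⟨Y, hY, htY⟩
      exact h _ hY htY

lemma Constraint.le_lub {X : Set Constraint} {x : Constraint} (hx : x ∈ X)
    {y : Constraint} (hy : ∀ z ∈ X, z ≤ y) : x ≤ Constraint.lub X := by
  unfold Constraint.lub
  split
  · next hj =>
    have h1 := hy _ hj.choose_spec
    have h2 := hy _ hx
    cases x with
    | just t =>
      rw [just_le_iff] at h1 h2 ⊢
      rw [h2] at h1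
      exact h1.symm
    | noneOf Y =>
      cases y with
      | noneOf Z => exact absurd h1 (by simp [LE.le, Constraint.le])
      | just w =>
        rw [just_le_iff] at h1
        obtain rfl : w = hj.choose := by injection h1
        exact h2
  · next hj =>
    cases x with
    | just t => exact absurd ⟨t, hx⟩ hj
    | noneOf Y => exact fun t ht => ⟨Y, hx, ht⟩

lemma CDB.lub_le {S : Set CDB} {y : CDB} (h : ∀ Δ ∈ S, Δ ≤ y) : CDB.lub S ≤ y := by
  intro a
  apply Constraint.lub_le
  rintro x ⟨Δ, hΔ, rfl⟩
  exact h Δ hΔ a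

lemma CDB.le_lub {S : Set CDB} {Δ : CDB} (hΔ : Δ ∈ S) {y : CDB}
    (hy : ∀ E ∈ S, E ≤ y) : Δ ≤ CDB.lub S := by
  intro a
  exact Constraint.le_lub ⟨Δ, hΔ, rfl⟩ (by rintro z ⟨E, hE, rfl⟩; exact hy E hE a)

lemma satC_mono {σ : Subst} {F : List VAtom} {Δ₁ Δ₂ : CDB} (h : Δ₁ ≤ Δ₂)
    (hs : satC σ F Δ₁) : satC σ F Δ₂ := by
  intro A hA
  exact Constraint.le_trans (hs A hA) (h _)

/-- The lifted immediate consequence operator is monotone. -/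
theorem TPs_monotone (P : Program) (hP : Program.WFP P) (𝒞₁ 𝒞₂ : Set CDB)
    (h₁ : IsChoiceSet 𝒞₁) (h₂ : IsChoiceSet 𝒞₂) (h : ChoiceLE 𝒞₁ 𝒞₂) :
    ChoiceLE (TPs P 𝒞₁) (TPs P 𝒞₂) := by
  intro E hE
  obtain ⟨Δ₂, hΔ₂, hE⟩ := hE
  obtain ⟨Δ₁, hΔ₁, hle⟩ := h Δ₂ hΔ₂
  set fired₂ : Set (Set CDB) :=
    { C | ∃ r ∈ P, ∃ σ : Subst, satC σ r.prems Δ₂ ∧ C = headChoice σ r.head } with hfired₂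
  set fired₁ : Set (Set CDB) :=
    { C | ∃ r ∈ P, ∃ σ : Subst, satC σ r.prems Δ₁ ∧ C = headChoice σ r.head } with hfired₁
  have hsub : fired₁ ⊆ fired₂ := by
    rintro C ⟨r, hr, σ, hσ, rfl⟩
    exact ⟨r, hr, σ, satC_mono hle hσ, rfl⟩
  obtain ⟨f, hf, ⟨y, hy⟩, hEeq⟩ := hE
  -- E is an upper bound of the range of f
  have hEub : ∀ x ∈ Set.range f, x ≤ E := by
    intro x hx
    rw [hEeq]
    exact CDB.le_lub hx (by rintro z hz; exact hy z hz)
  have hΔ₂mem : ({Δ₂} : Set CDB) ∈ insert {Δ₂} fired₂ := Set.mem_insert _ _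
  have hfΔ₂ : f ⟨{Δ₂}, hΔ₂mem⟩ = Δ₂ := hf ⟨{Δ₂}, hΔ₂mem⟩
  have hΔ₂leE : Δ₂ ≤ E := hfΔ₂ ▸ hEub _ ⟨_, rfl⟩
  -- build the selection g on the index set for Δ₁
  let g : (insert {Δ₁} fired₁ : Set (Set CDB)) → CDB := fun C =>
    if hC : (C : Set CDB) ∈ fired₂ then f ⟨C, Or.inr hC⟩ else Δ₁
  have hg : ∀ C : (insert {Δ₁} fired₁ : Set (Set CDB)), g C ∈ (C : Set CDB) := by
    rintro ⟨C, hC⟩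
    by_cases hC2 : C ∈ fired₂
    · simpa [g, hC2] using hf ⟨C, Or.inr hC2⟩
    · have : C = {Δ₁} := by
        rcases hC with h | h
        · exact h
        · exact absurd (hsub h) hC2
      subst this
      simp [g, hC2]
  have hgub : ∀ C : (insert {Δ₁} fired₁ : Set (Set CDB)), g C ≤ E := by
    rintro ⟨C, hC⟩
    by_cases hC2 : C ∈ fired₂
    · simpa [g, hC2] using hEub _ ⟨⟨C, Or.inr hC2⟩, by simp [g, hC2]⟩
    · simp only [g, hC2, dif_neg, not_false_iff]
      intro a
      exact Constraint.le_trans (hle a) (hΔ₂leE a)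
  refine ⟨CDB.lub (Set.range g), ⟨Δ₁, hΔ₁, g, hg, ⟨E, ?_⟩, rfl⟩, ?_⟩
  · rintro x ⟨C, rfl⟩; exact hgub C
  · apply CDB.lub_le
    rintro x ⟨C, rfl⟩
    exact hgub C

end FCLP
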